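/- arXiv:1708.09140 — 10 statements merged into one kernel-verified Lean document; each statement's English description precedes it below -/
import Mathlib

section
/- Let ψ = c₁ ∧ ⋯ ∧ c_m be a CNF formula over variables x₁,…,x_n. Define the instance I over relation R(A,B,C) consisting of facts (c_j, x_i, 1) when x_i occurs positively in c_j and (c_j, x_i, 0) when x_i occurs negatively in c_j. Then ψ is satisfiable if and only if I has a subset satisfying {A→B, B→C} of cardinality m. -/
/-- ψ (CNF with m clauses over n variables, clauses as nonempty
sets of literals (variable, polarity)) is satisfiable iff the instance
I = {(c_j, x_i, b) : literal (x_i, b) occurs in c_j} has a subset of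
cardinality m satisfying {A→B, B→C}. -/
theorem stmt2 (m n : ℕ) (C : Fin m → Finset (Fin n × Bool))
    (hne : ∀ j, (C j).Nonempty) :
    (∃ τ : Fin n → Bool, ∀ j, ∃ l ∈ C j, τ l.1 = l.2) ↔
    (∃ J : Finset (Fin m × Fin n × Bool),
      (∀ f ∈ J, (f.2.1, f.2.2) ∈ C f.1) ∧ J.card = m ∧
      (∀ f ∈ J, ∀ g ∈ J, f.1 = g.1 → f.2.1 = g.2.1) ∧
      (∀ f ∈ J, ∀ g ∈ J, f.2.1 = g.2.1 → f.2.2 = g.2.2)) := by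
  classical
  constructor
  · rintro ⟨τ, hτ⟩
    choose l hl hτl using hτ
    refine ⟨Finset.univ.image (fun j => (j, l j)), ?_, ?_, ?_, ?_⟩
    · intro f hf
      obtain ⟨j, -, rfl⟩ := Finset.mem_image.mp hf
      simpa using hl j
    · rw [Finset.card_image_of_injective _ (fun a b h => (Prod.mk.injEq ..).mp h |>.1)]
      simp
    · intro f hf g hg hfg
      obtain ⟨j, -, rfl⟩ := Finset.mem_image.mp hf
      obtain ⟨j', -, rfl⟩ := Finset.mem_image.mp hg
      simp_all
    · intro f hf g hg hfg
      obtain ⟨j, -, rfl⟩ := Finset.mem_image.mp hf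
      obtain ⟨j', -, rfl⟩ := Finset.mem_image.mp hg
      simp only at hfg ⊢
      rw [← hτl j, ← hτl j', hfg]
  · rintro ⟨J, hmem, hcard, hAB, hBC⟩
    -- first coordinate determines the fact
    have hinj : Set.InjOn Prod.fst (J : Set (Fin m × Fin n × Bool)) := by
      intro f hf g hg h
      have h2 := hAB f hf g hg h
      have h3 := hBC f hf g hg h2
      exact Prod.ext h (Prod.ext h2 h3)
    have himg : J.image Prod.fst = Finset.univ := by
      apply Finset.eq_univ_of_card
      rw [Finset.card_image_of_injOn hinj, hcard]
      simp
    -- for each clause j, there is a fact in J with first coordinate j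
    have hsurj : ∀ j : Fin m, ∃ f ∈ J, f.1 = j := by
      intro j
      have : j ∈ J.image Prod.fst := by rw [himg]; exact Finset.mem_univ j
      simpa using Finset.mem_image.mp this
    refine ⟨fun v => if h : ∃ b, ∃ j, (j, v, b) ∈ J then h.choose else false, ?_⟩
    intro j
    obtain ⟨f, hf, rfl⟩ := hsurj j
    refine ⟨(f.2.1, f.2.2), hmem f hf, ?_⟩
    have hex : ∃ b, ∃ j, (j, f.2.1, b) ∈ J := ⟨f.2.2, f.1, by simpa using hf⟩
    simp only [dif_pos hex]
    obtain ⟨j', hj'⟩ := hex.choose_spec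
    exact hBC _ hj' f hf rfl
end

section
/- Let ψ = c₁ ∧ ⋯ ∧ c_m be a CNF formula in which every clause is either all-positive or all-negative. Define the instance I over R(A,B,C) with facts (c_j, 1, x_i) when c_j is all-positive and contains x_i, and (c_j, 0, x_i) when c_j is all-negative and contains ¬x_i. Then ψ is satisfiable if and only if I has a subset of cardinality m satisfying {AB→C, C→B}. -/
/-- Non-mixed CNF (clause j has polarity `pol j` and variable set
`vars j`) is satisfiable iff the instance I = {(c_j, pol j, x_i) : x_i ∈ vars j}
has a subset of cardinality m satisfying {AB→C, C→B}. -/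
theorem stmt3 (m n : ℕ) (pol : Fin m → Bool) (vars : Fin m → Finset (Fin n))
    (hne : ∀ j, (vars j).Nonempty) :
    (∃ τ : Fin n → Bool, ∀ j, ∃ i ∈ vars j, τ i = pol j) ↔
    (∃ J : Finset (Fin m × Bool × Fin n),
      (∀ f ∈ J, f.2.1 = pol f.1 ∧ f.2.2 ∈ vars f.1) ∧ J.card = m ∧
      (∀ f ∈ J, ∀ g ∈ J, f.1 = g.1 → f.2.1 = g.2.1 → f.2.2 = g.2.2) ∧
      (∀ f ∈ J, ∀ g ∈ J, f.2.2 = g.2.2 → f.2.1 = g.2.1)) := by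
  classical
  constructor
  · rintro ⟨τ, hτ⟩
    choose w hw hwτ using hτ
    refine ⟨Finset.image (fun j => (j, pol j, w j)) Finset.univ, ?_, ?_, ?_, ?_⟩
    · intro f hf
      simp only [Finset.mem_image, Finset.mem_univ, true_and] at hf
      obtain ⟨j, rfl⟩ := hf
      exact ⟨rfl, hw j⟩
    · rw [Finset.card_image_of_injective _ (fun a b h => congrArg Prod.fst h),
        Finset.card_univ, Fintype.card_fin]
    · intro f hf g hg h1 _
      simp only [Finset.mem_image, Finset.mem_univ, true_and] at hf hg
      obtain ⟨j, rfl⟩ := hf; obtain ⟨k, rfl⟩ := hg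
      cases h1; rfl
    · intro f hf g hg h
      simp only [Finset.mem_image, Finset.mem_univ, true_and] at hf hg
      obtain ⟨j, rfl⟩ := hf; obtain ⟨k, rfl⟩ := hg
      simp only at h ⊢
      rw [← hwτ j, ← hwτ k, h]
  · rintro ⟨J, hJ1, hcard, hAB, hCB⟩
    have hinj : Set.InjOn (fun f : Fin m × Bool × Fin n => f.1) J := by
      intro f hf g hg h
      have h' : f.1 = g.1 := h
      have hb : f.2.1 = g.2.1 := by rw [(hJ1 f hf).1, (hJ1 g hg).1, h']
      exact Prod.ext h' (Prod.ext hb (hAB f hf g hg h' hb))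
    have hsurj : ∀ j : Fin m, ∃ f ∈ J, f.1 = j := by
      have h1 : (J.image Prod.fst).card = m := by
        rw [Finset.card_image_of_injOn hinj, hcard]
      have h2 : J.image Prod.fst = Finset.univ :=
        Finset.eq_univ_of_card _ (by simp [h1])
      intro j
      have : j ∈ J.image Prod.fst := h2 ▸ Finset.mem_univ j
      simpa using this
    refine ⟨fun i => if h : ∃ f ∈ J, f.2.2 = i then (h.choose).2.1 else true, fun j => ?_⟩
    obtain ⟨f, hf, hfj⟩ := hsurj j
    refine ⟨f.2.2, hfj ▸ (hJ1 f hf).2, ?_⟩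
    have hex : ∃ g ∈ J, g.2.2 = f.2.2 := ⟨f, hf, rfl⟩
    show (if h : ∃ g ∈ J, g.2.2 = f.2.2 then h.choose.2.1 else true) = pol j
    rw [dif_pos hex]
    have hc := hex.choose_spec
    rw [← hfj, ← (hJ1 f hf).1]
    exact hCB _ hc.1 f hf hc.2
end

section
/- Let ψ = c₁ ∧ ⋯ ∧ c_m be a CNF formula over variables x₁,…,x_n. Define the instance I over R(A,B,C) with facts (c_j, x_i, (x_i, 1)) when x_i occurs positively in c_j and (c_j, x_i, (x_i, 0)) when x_i occurs negatively in c_j. Then ψ is satisfiable if and only if I has a subset of cardinality m satisfying {A→C, B→C}. -/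
/-- ψ (CNF over n variables, m clauses as nonempty sets of
literals) is satisfiable iff the instance
I = {(c_j, x_i, (x_i, b)) : literal (x_i, b) occurs in c_j} has a subset of
cardinality m satisfying {A→C, B→C}. -/
theorem stmt4 (m n : ℕ) (C : Fin m → Finset (Fin n × Bool))
    (hne : ∀ j, (C j).Nonempty) :
    (∃ τ : Fin n → Bool, ∀ j, ∃ l ∈ C j, τ l.1 = l.2) ↔
    (∃ J : Finset (Fin m × Fin n × (Fin n × Bool)),
      (∀ f ∈ J, f.2.2.1 = f.2.1 ∧ (f.2.1, f.2.2.2) ∈ C f.1) ∧ J.card = m ∧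
      (∀ f ∈ J, ∀ g ∈ J, f.1 = g.1 → f.2.2 = g.2.2) ∧
      (∀ f ∈ J, ∀ g ∈ J, f.2.1 = g.2.1 → f.2.2 = g.2.2)) := by
  classical
  constructor
  · rintro ⟨τ, hτ⟩
    choose l hl hτl using hτ
    refine ⟨Finset.image (fun j => (j, (l j).1, (l j).1, τ (l j).1)) Finset.univ, ?_, ?_, ?_, ?_⟩
    · intro f hf
      simp only [Finset.mem_image, Finset.mem_univ, true_and] at hf
      obtain ⟨j, rfl⟩ := hf
      refine ⟨rfl, ?_⟩
      have := hl j
      have := hτl j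
      simpa [Prod.ext_iff, *] using hl j
    · rw [Finset.card_image_of_injective _ (fun a b h => by simpa using congrArg Prod.fst h)]
      simp
    · intro f hf g hg h
      simp only [Finset.mem_image, Finset.mem_univ, true_and] at hf hg
      obtain ⟨j, rfl⟩ := hf
      obtain ⟨k, rfl⟩ := hg
      simp_all
    · intro f hf g hg h
      simp only [Finset.mem_image, Finset.mem_univ, true_and] at hf hg
      obtain ⟨j, rfl⟩ := hf
      obtain ⟨k, rfl⟩ := hg
      simp_all
  · rintro ⟨J, hJ, hcard, hA, hB⟩
    -- first coordinate injective on J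
    have hinj : ∀ f ∈ J, ∀ g ∈ J, f.1 = g.1 → f = g := by
      intro f hf g hg h
      have h3 := hA f hf g hg h
      have h1 := (hJ f hf).1
      have h2 := (hJ g hg).1
      have : f.2.1 = g.2.1 := by rw [← h1, ← h2, h3]
      exact Prod.ext h (Prod.ext this h3)
    have hsurj : ∀ j : Fin m, ∃ f ∈ J, f.1 = j := by
      have : Finset.image Prod.fst J = Finset.univ := by
        apply Finset.eq_univ_of_card
        rw [Finset.card_image_of_injOn (fun f hf g hg h => hinj f hf g hg h), hcard]
        simp
      intro j
      have : j ∈ Finset.image Prod.fst J := this ▸ Finset.mem_univ j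
      simpa [Finset.mem_image, eq_comm] using this
    set τ : Fin n → Bool := fun v =>
      if h : ∃ f, f ∈ J ∧ f.2.1 = v then h.choose.2.2.2 else false with hτdef
    refine ⟨τ, fun j => ?_⟩
    obtain ⟨f, hf, hfj⟩ := hsurj j
    refine ⟨f.2.2, ?_, ?_⟩
    · have := (hJ f hf).2
      have h1 := (hJ f hf).1
      rw [← hfj]
      have : f.2.2 = (f.2.1, f.2.2.2) := Prod.ext h1 rfl
      rw [this]
      exact (hJ f hf).2
    · have hex : ∃ g, g ∈ J ∧ g.2.1 = f.2.2.1 := ⟨f, hf, ((hJ f hf).1).symm⟩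
      have : τ f.2.2.1 = hex.choose.2.2.2 := by
        rw [hτdef]; simp only [dif_pos hex]
      rw [this]
      have hg := hex.choose_spec
      have := hB hex.choose hg.1 f hf (by rw [hg.2, (hJ f hf).1])
      rw [this]
end

section
/- Let Δ be a set of FDs over attributes {A₁,…,A_k} with A on the left-hand side of every FD, and let I be an instance partitioned into blocks B_v by the value of A. If for each v, M_v is a maximum-cardinality subset of B_v satisfying π(Δ) (Δ with attribute A removed from all FDs), then ⋃_v M_v is a maximum-cardinality subset of I satisfying Δ. -/
/-- A set of facts satisfies a set of functional dependencies. -/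
def Sat {ι V : Type*} (J : Set (ι → V)) (Δ : Set (Set ι × Set ι)) : Prop :=
  ∀ d ∈ Δ, ∀ f ∈ J, ∀ g ∈ J, (∀ a ∈ d.1, f a = g a) → ∀ a ∈ d.2, f a = g a

/-- Attribute i₀ is on the left of every FD of Δ; I is partitioned
into blocks by the value at i₀.  If each M v is a maximum-cardinality subset of
the block B_v satisfying π(Δ) (Δ with i₀ removed from all FDs), then the union
of the M v over the values occurring in I is a maximum-cardinality subset of I
satisfying Δ (a cardinality repair). -/
theorem stmt8 {k : ℕ} {V : Type*} [DecidableEq V]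
    (Δ : Set (Set (Fin k) × Set (Fin k))) (i₀ : Fin k)
    (hA : ∀ d ∈ Δ, i₀ ∈ d.1)
    (I : Finset (Fin k → V)) (M : V → Finset (Fin k → V))
    (hsub : ∀ v, M v ⊆ I.filter (fun f => f i₀ = v))
    (hsat : ∀ v, Sat (↑(M v) : Set (Fin k → V))
      ((fun d : Set (Fin k) × Set (Fin k) => (d.1 \ {i₀}, d.2 \ {i₀})) '' Δ))
    (hmax : ∀ v, ∀ J' ⊆ I.filter (fun f => f i₀ = v),
      Sat (↑J' : Set (Fin k → V))
        ((fun d : Set (Fin k) × Set (Fin k) => (d.1 \ {i₀}, d.2 \ {i₀})) '' Δ) →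
      J'.card ≤ (M v).card) :
    (I.image (fun f => f i₀)).biUnion M ⊆ I ∧
    Sat (↑((I.image (fun f => f i₀)).biUnion M) : Set (Fin k → V)) Δ ∧
    ∀ J' ⊆ I, Sat (↑J' : Set (Fin k → V)) Δ →
      J'.card ≤ ((I.image (fun f => f i₀)).biUnion M).card := by

  have hMval : ∀ v, ∀ f ∈ M v, f i₀ = v := by
    intro v f hf
    exact (Finset.mem_filter.mp (hsub v hf)).2
  have hMI : ∀ v, M v ⊆ I := by
    intro v f hf
    exact (Finset.mem_filter.mp (hsub v hf)).1
  refine ⟨?_, ?_, ?_⟩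
  · intro f hf
    obtain ⟨v, _, hfv⟩ := Finset.mem_biUnion.mp hf
    exact hMI v hfv
  · intro d hd f hf g hg hagree a ha
    obtain ⟨v, hv, hfv⟩ := Finset.mem_biUnion.mp (by exact_mod_cast hf)
    obtain ⟨w, hw, hgw⟩ := Finset.mem_biUnion.mp (by exact_mod_cast hg)
    have hfg0 : f i₀ = g i₀ := hagree i₀ (hA d hd)
    have hwv : w = v := by
      rw [← hMval w g hgw, ← hfg0, hMval v f hfv]
    subst hwv
    by_cases hai : a = i₀
    · subst hai; exact hfg0
    · exact hsat w ((d.1 \ {i₀}, d.2 \ {i₀})) ⟨d, hd, rfl⟩ f hfv g hgw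
        (fun b hb => hagree b hb.1) a ⟨ha, hai⟩
  · intro J' hJ' hsatJ'
    have hdisj : ∀ v ∈ I.image (fun f => f i₀), ∀ w ∈ I.image (fun f => f i₀),
        v ≠ w → Disjoint (M v) (M w) := by
      intro v _ w _ hvw
      refine Finset.disjoint_left.mpr ?_
      intro f hfv hfw
      exact hvw ((hMval v f hfv).symm.trans (hMval w f hfw))
    rw [Finset.card_biUnion hdisj]
    have hfib : J'.card = ∑ v ∈ J'.image (fun f => f i₀),
        (J'.filter (fun f => f i₀ = v)).card :=
      Finset.card_eq_sum_card_fiberwise (fun f hf => Finset.mem_image_of_mem _ hf)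
    rw [hfib]
    have himg : J'.image (fun f => f i₀) ⊆ I.image (fun f => f i₀) :=
      Finset.image_subset_image hJ'
    calc ∑ v ∈ J'.image (fun f => f i₀), (J'.filter (fun f => f i₀ = v)).card
        ≤ ∑ v ∈ J'.image (fun f => f i₀), (M v).card := by
          refine Finset.sum_le_sum ?_
          intro v _
          refine hmax v _ ?_ ?_
          · intro f hf
            rw [Finset.mem_filter] at hf ⊢
            exact ⟨hJ' hf.1, hf.2⟩
          · rintro d ⟨e, he, rfl⟩ f hf g hg hagree a ha
            simp only [Finset.coe_filter, Set.mem_setOf_eq] at hf hg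
            have h1 : ∀ b ∈ e.1, f b = g b := by
              intro b hb
              by_cases hbi : b = i₀
              · subst hbi; rw [hf.2, hg.2]
              · exact hagree b ⟨hb, hbi⟩
            exact hsatJ' e he f hf.1 g hg.1 h1 a ha.1
      _ ≤ ∑ v ∈ I.image (fun f => f i₀), (M v).card := by
          refine Finset.sum_le_sum_of_subset himg
end

section
/- Let Δ be a set of FDs containing ∅→X, and let I be an instance partitioned into blocks B_x by the values on X. If M_x is a maximum-cardinality subset of B_x satisfying π(Δ) (Δ with the attributes of X removed from all FDs) for each x, then any M_x of largest cardinality among all blocks is a maximum-cardinality subset of I satisfying Δ. -/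
/-- Δ contains ∅→X, and I is partitioned into blocks B_x by the
values on X.  If each M x is a maximum-cardinality subset of B_x satisfying
π(Δ) (Δ with the attributes of X removed), then an M x₀ of largest cardinality
among all blocks is a maximum-cardinality subset of I satisfying Δ. -/
theorem stmt10 {k : ℕ} {V : Type*} [DecidableEq V]
    (Δ : Set (Set (Fin k) × Set (Fin k))) (X : Finset (Fin k))
    (hX : ((∅ : Set (Fin k)), (↑X : Set (Fin k))) ∈ Δ)
    (I : Finset (Fin k → V))
    (M : ({a : Fin k // a ∈ X} → V) → Finset (Fin k → V))
    (hsub : ∀ x, M x ⊆ I.filter (fun f => ∀ a : {a : Fin k // a ∈ X}, f a.1 = x a))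
    (hsat : ∀ x, Sat (↑(M x) : Set (Fin k → V))
      ((fun d : Set (Fin k) × Set (Fin k) => (d.1 \ ↑X, d.2 \ ↑X)) '' Δ))
    (hmax : ∀ x, ∀ J' ⊆ I.filter (fun f => ∀ a : {a : Fin k // a ∈ X}, f a.1 = x a),
      Sat (↑J' : Set (Fin k → V))
        ((fun d : Set (Fin k) × Set (Fin k) => (d.1 \ ↑X, d.2 \ ↑X)) '' Δ) →
      J'.card ≤ (M x).card)
    (x₀ : {a : Fin k // a ∈ X} → V)
    (hbig : ∀ x, (M x).card ≤ (M x₀).card) :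
    M x₀ ⊆ I ∧ Sat (↑(M x₀) : Set (Fin k → V)) Δ ∧
    ∀ J' ⊆ I, Sat (↑J' : Set (Fin k → V)) Δ → J'.card ≤ (M x₀).card := by
  refine ⟨(hsub x₀).trans (Finset.filter_subset _ _), ?_, ?_⟩
  · intro d hd f hf g hg hfg a ha
    by_cases haX : a ∈ X
    · have hfX := (hsub x₀) hf
      have hgX := (hsub x₀) hg
      rw [Finset.mem_filter] at hfX hgX
      rw [hfX.2 ⟨a, haX⟩, hgX.2 ⟨a, haX⟩]
    · exact hsat x₀ _ ⟨d, hd, rfl⟩ f hf g hg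
        (fun b hb => hfg b hb.1) a ⟨ha, haX⟩
  · intro J' hJ' hsatJ
    rcases J'.eq_empty_or_nonempty with rfl | ⟨f₀, hf₀⟩
    · simp
    · set x : {a : Fin k // a ∈ X} → V := fun a => f₀ a.1 with hx
      have hagree : ∀ f ∈ J', ∀ a : {a : Fin k // a ∈ X}, f a.1 = x a := by
        intro f hf a
        exact hsatJ _ hX f hf f₀ hf₀
          (fun b hb => absurd hb (Set.notMem_empty b)) a.1 a.2
      have hsub' : J' ⊆ I.filter (fun f => ∀ a : {a : Fin k // a ∈ X}, f a.1 = x a) := by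
        intro f hf
        exact Finset.mem_filter.mpr ⟨hJ' hf, hagree f hf⟩
      have hsatproj : Sat (↑J' : Set (Fin k → V))
          ((fun d : Set (Fin k) × Set (Fin k) => (d.1 \ ↑X, d.2 \ ↑X)) '' Δ) := by
        rintro _ ⟨d, hd, rfl⟩ f hf g hg hfg a ha
        refine hsatJ d hd f hf g hg ?_ a ha.1
        intro b hb
        by_cases hbX : b ∈ X
        · rw [hagree f hf ⟨b, hbX⟩, hagree g hg ⟨b, hbX⟩]
        · exact hfg b ⟨hb, hbX⟩
      exact (hmax x J' hsub' hsatproj).trans (hbig x)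
end

section
/- Let Δ contain FDs X₁→Y₁ and X₂→Y₂ with X₁⊆Y₂ and X₂⊆Y₁, and assume every FD Z→W in Δ satisfies X₁⊆Z or X₂⊆Z. Let J ⊆ I be such that for any two distinct facts f,g ∈ J, either (f[X₁]=g[X₁] and f[X₂]=g[X₂]) or (f[X₁]≠g[X₁] and f[X₂]≠g[X₂]); and within each block B_{x,y} = {f : f[X₁]=x, f[X₂]=y}, J ∩ B_{x,y} satisfies π(Δ), where π(Δ) removes the attributes of X₁∪X₂ from all FDs. Then J satisfies Δ. -/
/-- Δ contains X₁→Y₁ and X₂→Y₂ with X₁ ⊆ Y₂ and X₂ ⊆ Y₁, and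
every FD of Δ has X₁ or X₂ contained in its left side.  If any two distinct
facts of J ⊆ I either agree on both X₁ and X₂ or disagree on both, and within
each block (facts agreeing on X₁ ∪ X₂) J satisfies π(Δ) (attributes of X₁ ∪ X₂
removed from all FDs), then J satisfies Δ. -/
theorem stmt12 {ι V : Type*} (Δ : Set (Set ι × Set ι))
    (X₁ Y₁ X₂ Y₂ : Set ι) (h1 : (X₁, Y₁) ∈ Δ) (h2 : (X₂, Y₂) ∈ Δ)
    (h12 : X₁ ⊆ Y₂) (h21 : X₂ ⊆ Y₁)
    (hcover : ∀ d ∈ Δ, X₁ ⊆ d.1 ∨ X₂ ⊆ d.1)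
    (I J : Set (ι → V)) (hJI : J ⊆ I)
    (hdich : ∀ f ∈ J, ∀ g ∈ J, f ≠ g →
      (((∀ a ∈ X₁, f a = g a) ∧ (∀ a ∈ X₂, f a = g a)) ∨
       (¬(∀ a ∈ X₁, f a = g a) ∧ ¬(∀ a ∈ X₂, f a = g a))))
    (hblocks : ∀ f ∈ J, ∀ g ∈ J, (∀ a ∈ X₁ ∪ X₂, f a = g a) →
      ∀ d ∈ Δ, (∀ a ∈ d.1 \ (X₁ ∪ X₂), f a = g a) →
        ∀ a ∈ d.2 \ (X₁ ∪ X₂), f a = g a) :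
    Sat J Δ := by
  intro d hd f hf g hg hagree a ha
  by_cases hfg : f = g
  · rw [hfg]
  have hX : (∀ a ∈ X₁, f a = g a) ∧ (∀ a ∈ X₂, f a = g a) := by
    rcases hdich f hf g hg hfg with h | h
    · exact h
    · exfalso
      rcases hcover d hd with hc | hc
      · exact h.1 (fun b hb => hagree b (hc hb))
      · exact h.2 (fun b hb => hagree b (hc hb))
  have hU : ∀ b ∈ X₁ ∪ X₂, f b = g b := by
    rintro b (hb | hb)
    · exact hX.1 b hb
    · exact hX.2 b hb
  by_cases haU : a ∈ X₁ ∪ X₂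
  · exact hU a haU
  · exact hblocks f hf g hg hU d hd (fun b hb => hagree b hb.1) a ⟨ha, haU⟩
end

section
/- With Π as in the disjoint-closures fact-wise reduction (Π(f) defined by cases on attribute membership in X₁∩X₂, X₁∖X₂, X₂∖X₁, X₁⁺∖X₁, X₂⁺∖X₂, and the rest), for any two distinct facts f=(a,b,c) and f'=(a',b',c') of R(A,B,C): the pair {f,f'} satisfies {A→C, B→C} if and only if {Π(f),Π(f')} satisfies Δ. -/
open scoped Classical

/-- Tagged value domain for fact-wise reductions. -/
inductive Val (α β γ : Type*) where
  | const : Val α β γ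
  | va : α → Val α β γ
  | vb : β → Val α β γ
  | vc : γ → Val α β γ
  | vab : α × β → Val α β γ
  | vac : α × γ → Val α β γ
  | vbc : β × γ → Val α β γ
  | vabc : α × β × γ → Val α β γ

/-- The closure X⁺ of an attribute set X under a set Δ of FDs. -/
def fdClosure {ι : Type*} (Δ : Set (Set ι × Set ι)) (X : Set ι) : Set ι :=
  ⋂₀ {Z | X ⊆ Z ∧ ∀ d ∈ Δ, d.1 ⊆ Z → d.2 ⊆ Z}

/-- The fact-wise reduction Π for the disjoint-closures case. -/
noncomputable def Pi13 {ι α β γ : Type*} (Δ : Set (Set ι × Set ι))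
    (X₁ X₂ : Set ι) (f : α × β × γ) : ι → Val α β γ := fun k =>
  if k ∈ X₁ ∩ X₂ then .const
  else if k ∈ X₁ \ X₂ then .va f.1
  else if k ∈ X₂ \ X₁ then .vb f.2.1
  else if k ∈ fdClosure Δ X₁ \ X₁ then .vac (f.1, f.2.2)
  else if k ∈ fdClosure Δ X₂ \ X₂ then .vbc (f.2.1, f.2.2)
  else .vab (f.1, f.2.1)

lemma subset_fdClosure {ι : Type*} (Δ : Set (Set ι × Set ι)) (X : Set ι) :
    X ⊆ fdClosure Δ X :=
  fun _ hk => Set.mem_sInter.2 fun _ hZ => hZ.1 hk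

lemma fdClosure_closed {ι : Type*} (Δ : Set (Set ι × Set ι)) (X : Set ι)
    {d : Set ι × Set ι} (hd : d ∈ Δ) (h : d.1 ⊆ fdClosure Δ X) :
    d.2 ⊆ fdClosure Δ X :=
  fun k hk => Set.mem_sInter.2 fun Z hZ =>
    hZ.2 d hd (fun j hj => Set.mem_sInter.1 (h hj) Z hZ) hk

/-- Under the disjoint-closures hypotheses, for distinct facts
f = (a,b,c) and f' = (a',b',c'): {f,f'} satisfies {A→C, B→C} iff
{Π(f), Π(f')} satisfies Δ. -/
theorem stmt14 {ι α β γ : Type*} (Δ : Set (Set ι × Set ι))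
    (X₁ Y₁ X₂ Y₂ : Set ι) (h1 : (X₁, Y₁) ∈ Δ) (h2 : (X₂, Y₂) ∈ Δ)
    (hne : X₁ ≠ X₂)
    (hmin1 : ∀ d ∈ Δ, ¬ d.1 ⊂ X₁) (hmin2 : ∀ d ∈ Δ, ¬ d.1 ⊂ X₂)
    (hnt1 : ¬ Y₁ ⊆ X₁) (hnt2 : ¬ Y₂ ⊆ X₂)
    (hd1 : (fdClosure Δ X₁ \ X₁) ∩ fdClosure Δ X₂ = ∅)
    (hd2 : (fdClosure Δ X₂ \ X₂) ∩ fdClosure Δ X₁ = ∅) :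
    ∀ f f' : α × β × γ, f ≠ f' →
      (((f.1 = f'.1 → f.2.2 = f'.2.2) ∧ (f.2.1 = f'.2.1 → f.2.2 = f'.2.2)) ↔
        Sat {Pi13 Δ X₁ X₂ f, Pi13 Δ X₁ X₂ f'} Δ) := by
  intro f f' hff'
  have hX1 : X₁ ⊆ fdClosure Δ X₁ := subset_fdClosure Δ X₁
  have hX2 : X₂ ⊆ fdClosure Δ X₂ := subset_fdClosure Δ X₂
  have hY1 : Y₁ ⊆ fdClosure Δ X₁ := fdClosure_closed Δ X₁ h1 hX1
  have hY2 : Y₂ ⊆ fdClosure Δ X₂ := fdClosure_closed Δ X₂ h2 hX2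
  -- value lemmas
  have v0 : ∀ (g : α × β × γ) k, k ∈ X₁ → k ∈ X₂ →
      Pi13 Δ X₁ X₂ g k = Val.const := by
    intro g k hk1 hk2
    simp [Pi13, Set.mem_inter_iff, hk1, hk2]
  have v1 : ∀ (g : α × β × γ) k, k ∈ X₁ → k ∉ X₂ →
      Pi13 Δ X₁ X₂ g k = Val.va g.1 := by
    intro g k hk1 hk2
    simp [Pi13, Set.mem_inter_iff, Set.mem_diff, hk1, hk2]
  have v2 : ∀ (g : α × β × γ) k, k ∉ X₁ → k ∈ X₂ →
      Pi13 Δ X₁ X₂ g k = Val.vb g.2.1 := by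
    intro g k hk1 hk2
    simp [Pi13, Set.mem_inter_iff, Set.mem_diff, hk1, hk2]
  have v3 : ∀ (g : α × β × γ) k, k ∈ fdClosure Δ X₁ → k ∉ X₁ →
      Pi13 Δ X₁ X₂ g k = Val.vac (g.1, g.2.2) := by
    intro g k hkC hkX
    have hk2 : k ∉ X₂ := fun h =>
      (Set.eq_empty_iff_forall_notMem.1 hd1 k) ⟨⟨hkC, hkX⟩, hX2 h⟩
    simp [Pi13, Set.mem_inter_iff, Set.mem_diff, hkX, hk2, hkC]
  have v4 : ∀ (g : α × β × γ) k, k ∈ fdClosure Δ X₂ → k ∉ X₂ →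
      Pi13 Δ X₁ X₂ g k = Val.vbc (g.2.1, g.2.2) := by
    intro g k hkC hkX
    have hkC1 : k ∉ fdClosure Δ X₁ := fun h =>
      (Set.eq_empty_iff_forall_notMem.1 hd2 k) ⟨⟨hkC, hkX⟩, h⟩
    have hkX1 : k ∉ X₁ := fun h => hkC1 (hX1 h)
    simp [Pi13, Set.mem_inter_iff, Set.mem_diff, hkX, hkX1, hkC1, hkC]
  have v5 : ∀ (g : α × β × γ) k, k ∉ fdClosure Δ X₁ → k ∉ fdClosure Δ X₂ →
      Pi13 Δ X₁ X₂ g k = Val.vab (g.1, g.2.1) := by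
    intro g k hk1 hk2
    have hkX1 : k ∉ X₁ := fun h => hk1 (hX1 h)
    have hkX2 : k ∉ X₂ := fun h => hk2 (hX2 h)
    simp [Pi13, Set.mem_inter_iff, Set.mem_diff, hkX1, hkX2, hk1, hk2]
  set P := Pi13 Δ X₁ X₂ f with hP
  set P' := Pi13 Δ X₁ X₂ f' with hP'
  constructor
  · rintro ⟨hac, hbc⟩
    -- key claim: premise on P,P' transfers
    have key : ∀ d ∈ Δ, (∀ j ∈ d.1, P j = P' j) → ∀ k ∈ d.2, P k = P' k := by
      intro d hd hprem
      by_cases ha : f.1 = f'.1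
      · by_cases hb : f.2.1 = f'.2.1
        · -- all coordinates equal
          have hc : f.2.2 = f'.2.2 := hac ha
          have hf : f = f' := Prod.ext ha (Prod.ext hb hc)
          intro k _; rw [hP, hP', hf]
        · -- a = a', b ≠ b', c = c'
          have hc : f.2.2 = f'.2.2 := hac ha
          have agreeC1 : ∀ j ∈ fdClosure Δ X₁, P j = P' j := by
            intro j hj
            by_cases hjX : j ∈ X₁
            · by_cases hjX2 : j ∈ X₂
              · rw [hP, hP', v0 f j hjX hjX2, v0 f' j hjX hjX2]
              · rw [hP, hP', v1 f j hjX hjX2, v1 f' j hjX hjX2, ha]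
            · rw [hP, hP', v3 f j hj hjX, v3 f' j hj hjX, ha, hc]
          have conv : ∀ j, P j = P' j → j ∈ fdClosure Δ X₁ := by
            intro j hpj
            by_contra hjC
            have hjX1 : j ∉ X₁ := fun h => hjC (hX1 h)
            by_cases hjC2 : j ∈ fdClosure Δ X₂
            · by_cases hjX2 : j ∈ X₂
              · rw [hP, hP', v2 f j hjX1 hjX2, v2 f' j hjX1 hjX2] at hpj
                injection hpj with h; exact hb h
              · rw [hP, hP', v4 f j hjC2 hjX2, v4 f' j hjC2 hjX2] at hpj
                injection hpj with h; exact hb (Prod.ext_iff.1 h).1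
            · rw [hP, hP', v5 f j hjC hjC2, v5 f' j hjC hjC2] at hpj
              injection hpj with h; exact hb (Prod.ext_iff.1 h).2
          have hsub : d.1 ⊆ fdClosure Δ X₁ := fun j hj => conv j (hprem j hj)
          have hsub2 : d.2 ⊆ fdClosure Δ X₁ := fdClosure_closed Δ X₁ hd hsub
          intro k hk; exact agreeC1 k (hsub2 hk)
      · by_cases hb : f.2.1 = f'.2.1
        · -- b = b', a ≠ a', c = c'
          have hc : f.2.2 = f'.2.2 := hbc hb
          have agreeC2 : ∀ j ∈ fdClosure Δ X₂, P j = P' j := by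
            intro j hj
            by_cases hjX : j ∈ X₂
            · by_cases hjX1 : j ∈ X₁
              · rw [hP, hP', v0 f j hjX1 hjX, v0 f' j hjX1 hjX]
              · rw [hP, hP', v2 f j hjX1 hjX, v2 f' j hjX1 hjX, hb]
            · rw [hP, hP', v4 f j hj hjX, v4 f' j hj hjX, hb, hc]
          have conv : ∀ j, P j = P' j → j ∈ fdClosure Δ X₂ := by
            intro j hpj
            by_contra hjC
            have hjX2 : j ∉ X₂ := fun h => hjC (hX2 h)
            by_cases hjC1 : j ∈ fdClosure Δ X₁
            · by_cases hjX1 : j ∈ X₁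
              · rw [hP, hP', v1 f j hjX1 hjX2, v1 f' j hjX1 hjX2] at hpj
                injection hpj with h; exact ha h
              · rw [hP, hP', v3 f j hjC1 hjX1, v3 f' j hjC1 hjX1] at hpj
                injection hpj with h; exact ha (Prod.ext_iff.1 h).1
            · rw [hP, hP', v5 f j hjC1 hjC, v5 f' j hjC1 hjC] at hpj
              injection hpj with h; exact ha (Prod.ext_iff.1 h).1
          have hsub : d.1 ⊆ fdClosure Δ X₂ := fun j hj => conv j (hprem j hj)
          have hsub2 : d.2 ⊆ fdClosure Δ X₂ := fdClosure_closed Δ X₂ hd hsub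
          intro k hk; exact agreeC2 k (hsub2 hk)
        · -- a ≠ a', b ≠ b': premise forces d.1 ⊆ X₁ ∩ X₂, impossible
          exfalso
          have conv : ∀ j, P j = P' j → j ∈ X₁ ∧ j ∈ X₂ := by
            intro j hpj
            by_cases hjX1 : j ∈ X₁
            · by_cases hjX2 : j ∈ X₂
              · exact ⟨hjX1, hjX2⟩
              · rw [hP, hP', v1 f j hjX1 hjX2, v1 f' j hjX1 hjX2] at hpj
                injection hpj with h; exact absurd h ha
            · by_cases hjX2 : j ∈ X₂
              · rw [hP, hP', v2 f j hjX1 hjX2, v2 f' j hjX1 hjX2] at hpj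
                injection hpj with h; exact absurd h hb
              · by_cases hjC1 : j ∈ fdClosure Δ X₁
                · rw [hP, hP', v3 f j hjC1 hjX1, v3 f' j hjC1 hjX1] at hpj
                  injection hpj with h; exact absurd (Prod.ext_iff.1 h).1 ha
                · by_cases hjC2 : j ∈ fdClosure Δ X₂
                  · rw [hP, hP', v4 f j hjC2 hjX2, v4 f' j hjC2 hjX2] at hpj
                    injection hpj with h; exact absurd (Prod.ext_iff.1 h).1 hb
                  · rw [hP, hP', v5 f j hjC1 hjC2, v5 f' j hjC1 hjC2] at hpj
                    injection hpj with h; exact absurd (Prod.ext_iff.1 h).1 ha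
          have hs1 : d.1 ⊆ X₁ := fun j hj => (conv j (hprem j hj)).1
          have hs2 : d.1 ⊆ X₂ := fun j hj => (conv j (hprem j hj)).2
          have he1 : d.1 = X₁ := by
            rcases hs1.ssubset_or_eq with h | h
            · exact absurd h (hmin1 d hd)
            · exact h
          have he2 : d.1 = X₂ := by
            rcases hs2.ssubset_or_eq with h | h
            · exact absurd h (hmin2 d hd)
            · exact h
          exact hne (he1 ▸ he2)
    -- now unfold Sat
    intro d hd g hg g' hg' hprem k hk
    simp only [Set.mem_insert_iff, Set.mem_singleton_iff] at hg hg'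
    rcases hg with rfl | rfl <;> rcases hg' with rfl | rfl
    · rfl
    · exact key d hd hprem k hk
    · exact (key d hd (fun j hj => (hprem j hj).symm) k hk).symm
    · rfl
  · intro hsat
    have hPmem : P ∈ ({P, P'} : Set (ι → Val α β γ)) := Set.mem_insert _ _
    have hPmem' : P' ∈ ({P, P'} : Set (ι → Val α β γ)) :=
      Set.mem_insert_of_mem _ rfl
    constructor
    · intro ha
      obtain ⟨k, hkY, hkX⟩ := Set.not_subset.1 hnt1
      have hprem : ∀ j ∈ X₁, P j = P' j := by
        intro j hj
        by_cases hjX2 : j ∈ X₂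
        · rw [hP, hP', v0 f j hj hjX2, v0 f' j hj hjX2]
        · rw [hP, hP', v1 f j hj hjX2, v1 f' j hj hjX2, ha]
      have := hsat (X₁, Y₁) h1 P hPmem P' hPmem' hprem k hkY
      rw [hP, hP', v3 f k (hY1 hkY) hkX, v3 f' k (hY1 hkY) hkX] at this
      injection this with h; exact (Prod.ext_iff.1 h).2
    · intro hb
      obtain ⟨k, hkY, hkX⟩ := Set.not_subset.1 hnt2
      have hprem : ∀ j ∈ X₂, P j = P' j := by
        intro j hj
        by_cases hjX1 : j ∈ X₁
        · rw [hP, hP', v0 f j hjX1 hj, v0 f' j hjX1 hj]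
        · rw [hP, hP', v2 f j hjX1 hj, v2 f' j hjX1 hj, hb]
      have := hsat (X₂, Y₂) h2 P hPmem P' hPmem' hprem k hkY
      rw [hP, hP', v4 f k (hY2 hkY) hkX, v4 f' k (hY2 hkY) hkX] at this
      injection this with h; exact (Prod.ext_iff.1 h).2
end

section
/- Let Δ be a set of FDs over attributes {A₁,…,A_m} all of whose FDs contain attribute A_i on the left. Define Π on facts f over the remaining attributes by Π(f)[A_i] = ⊙ (a fixed constant) and Π(f)[A_k] = f[A_k] otherwise. Then Π is injective, and for any two distinct facts f, f': {f,f'} satisfies π(Δ) (Δ with A_i removed) if and only if {Π(f),Π(f')} satisfies Δ. -/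
open scoped Classical

/-- Π for simplification 1: extend a fact over the attributes other than i₀
by placing the constant c at i₀. -/
noncomputable def lift1 {ι V : Type*} (i₀ : ι) (c : V)
    (f : {a : ι // a ≠ i₀} → V) : ι → V :=
  fun k => if h : k = i₀ then c else f ⟨k, h⟩

lemma lift1_ne {ι V : Type*} (i₀ : ι) (c : V) (f : {a : ι // a ≠ i₀} → V)
    (a : {a : ι // a ≠ i₀}) : lift1 i₀ c f a.val = f a := by
  simp [lift1, a.2]

/-- If every FD of Δ contains i₀ on its left side, then Π
(padding with the constant ⊙ at i₀) is injective, and for distinct facts f, f'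
over the remaining attributes: {f,f'} satisfies π(Δ) (Δ with i₀ removed) iff
{Π(f), Π(f')} satisfies Δ. -/
theorem stmt15 {ι V : Type*} (Δ : Set (Set ι × Set ι)) (i₀ : ι)
    (hA : ∀ d ∈ Δ, i₀ ∈ d.1) (c : V) :
    Function.Injective (lift1 i₀ c : ({a : ι // a ≠ i₀} → V) → ι → V) ∧
    ∀ f f' : {a : ι // a ≠ i₀} → V, f ≠ f' →
      (Sat {f, f'}
          ((fun d : Set ι × Set ι =>
              ((Subtype.val ⁻¹' d.1 : Set {a : ι // a ≠ i₀}),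
               (Subtype.val ⁻¹' d.2 : Set {a : ι // a ≠ i₀}))) '' Δ) ↔
        Sat {lift1 i₀ c f, lift1 i₀ c f'} Δ) := by
  constructor
  · intro f g h
    funext a
    have := congrFun h a.val
    rwa [lift1_ne, lift1_ne] at this
  · intro f f' _
    constructor
    · -- Sat preimage → Sat lifted
      intro hs d hd g hg g' hg' hagree a ha
      obtain ⟨g₀, hg₀, rfl⟩ : ∃ g₀ ∈ ({f, f'} : Set _), g = lift1 i₀ c g₀ := by
        rcases hg with h | h
        exacts [⟨f, Or.inl rfl, h⟩, ⟨f', Or.inr rfl, h⟩]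
      obtain ⟨g₁, hg₁, rfl⟩ : ∃ g₁ ∈ ({f, f'} : Set _), g' = lift1 i₀ c g₁ := by
        rcases hg' with h | h
        exacts [⟨f, Or.inl rfl, h⟩, ⟨f', Or.inr rfl, h⟩]
      by_cases hai : a = i₀
      · subst hai; simp [lift1]
      · have key := hs _ ⟨d, hd, rfl⟩ g₀ hg₀ g₁ hg₁ (fun b hb => by
          have := hagree b.val hb
          rwa [lift1_ne, lift1_ne] at this) ⟨a, hai⟩ ha
        rw [show a = (⟨a, hai⟩ : {a : ι // a ≠ i₀}).val from rfl, lift1_ne, lift1_ne]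
        exact key
    · -- Sat lifted → Sat preimage
      rintro hs d ⟨e, he, rfl⟩ g hg g' hg' hagree a ha
      have lmem : ∀ x ∈ ({f, f'} : Set _), lift1 i₀ c x ∈
          ({lift1 i₀ c f, lift1 i₀ c f'} : Set (ι → V)) := by
        rintro x (rfl | rfl)
        exacts [Or.inl rfl, Or.inr rfl]
      have key := hs e he _ (lmem g hg) _ (lmem g' hg') (fun b hb => by
        by_cases hbi : b = i₀
        · subst hbi; simp [lift1]
        · rw [show b = (⟨b, hbi⟩ : {a : ι // a ≠ i₀}).val from rfl, lift1_ne, lift1_ne]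
          exact hagree ⟨b, hbi⟩ hb) a.val ha
      rwa [lift1_ne, lift1_ne] at key
end

section
/- Let Δ be a set of FDs over attributes {A₁,…,A_m} and X a fixed attribute set. Define Π on facts f over the attributes outside X by Π(f)[A_k] = ⊙ for A_k ∈ X and Π(f)[A_k] = f[A_k] otherwise. Then for any two distinct facts f, f': {f,f'} satisfies π_X(Δ) if and only if {Π(f),Π(f')} satisfies Δ. -/
open scoped Classical

/-- Π for simplification 2: extend a fact over the attributes outside X by
placing the constant c on all attributes of X. -/
noncomputable def liftX {ι V : Type*} (X : Set ι) (c : V)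
    (f : {a : ι // a ∉ X} → V) : ι → V :=
  fun k => if h : k ∈ X then c else f ⟨k, h⟩

lemma liftX_inj {ι V : Type*} {X : Set ι} {c : V}
    {f g : {a : ι // a ∉ X} → V} (h : liftX X c f = liftX X c g) : f = g := by
  funext a
  have := congrFun h a.1
  simpa [liftX, a.2] using this

/-- For a fixed attribute set X (e.g. with (∅→X) ∈ Δ), and
distinct facts f, f' over the attributes outside X: {f,f'} satisfies π_X(Δ)
(the attributes of X removed from every FD) iff {Π(f), Π(f')} satisfies Δ. -/
theorem stmt16 {ι V : Type*} (Δ : Set (Set ι × Set ι)) (X : Set ι) (c : V) :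
    ∀ f f' : {a : ι // a ∉ X} → V, f ≠ f' →
      (Sat {f, f'}
          ((fun d : Set ι × Set ι =>
              ((Subtype.val ⁻¹' d.1 : Set {a : ι // a ∉ X}),
               (Subtype.val ⁻¹' d.2 : Set {a : ι // a ∉ X}))) '' Δ) ↔
        Sat {liftX X c f, liftX X c f'} Δ) := by
  intro f f' _hne
  constructor
  · intro hS d hd g hg h hh hag a ha
    by_cases hx : a ∈ X
    · rcases hg with rfl | rfl <;> rcases hh with rfl | rfl <;> simp [liftX, hx]
    · -- obtain underlying subtype facts
      obtain ⟨u, hu, rfl⟩ : ∃ u ∈ ({f, f'} : Set _), g = liftX X c u := by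
        rcases hg with rfl | rfl
        exacts [⟨f, Or.inl rfl, rfl⟩, ⟨f', Or.inr rfl, rfl⟩]
      obtain ⟨v, hv, rfl⟩ : ∃ v ∈ ({f, f'} : Set _), h = liftX X c v := by
        rcases hh with rfl | rfl
        exacts [⟨f, Or.inl rfl, rfl⟩, ⟨f', Or.inr rfl, rfl⟩]
      have key := hS _ ⟨d, hd, rfl⟩ u hu v hv (fun b hb => by
        have := hag b.1 hb
        simpa [liftX, b.2] using this) ⟨a, hx⟩ ha
      simpa [liftX, hx] using key
  · intro hS d' hd' g hg h hh hag a ha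
    obtain ⟨d, hd, rfl⟩ := hd'
    have key := hS d hd (liftX X c g)
      (by rcases hg with rfl | rfl; exacts [Or.inl rfl, Or.inr rfl])
      (liftX X c h)
      (by rcases hh with rfl | rfl; exacts [Or.inl rfl, Or.inr rfl])
      (fun b hb => by
        by_cases hx : b ∈ X
        · simp [liftX, hx]
        · simpa [liftX, hx] using hag ⟨b, hx⟩ hb)
      a.1 ha
    simpa [liftX, a.2] using key
end

section
/- Let Δ contain two local minima X₁→Y₁ and X₂→Y₂ with (X₁⁺∖X₁)∩X₂ ≠ ∅, (X₂⁺∖X₂)∩X₁ ≠ ∅, and (X₂∖X₁) ⊄ (X₁⁺∖X₁). Define Π mapping (a,b,c) over R(A,B,C) to a fact over {A₁,…,A_n} by: ⊙ on X₁∩X₂; c on X₁∖X₂; b on (X₂∖X₁)∩(X₁⁺∖X₁); ⟨a,b⟩ on (X₂∖X₁)∖(X₁⁺∖X₁); ⟨b,c⟩ on (X₁⁺∖X₁)∖(X₂∖X₁); ⟨a,b,c⟩ elsewhere. Then Π is injective, and for distinct f=(a,b,c), f'=(a',b',c'): {f,f'} satisfies {AB→C, C→B} iff {Π(f),Π(f')}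 satisfies Δ. -/
open scoped Classical

/-- The fact-wise reduction Π from the schema {AB→C, C→B}. -/
noncomputable def Pi18 {ι α β γ : Type*} (Δ : Set (Set ι × Set ι))
    (X₁ X₂ : Set ι) (f : α × β × γ) : ι → Val α β γ := fun k =>
  if k ∈ X₁ ∩ X₂ then .const
  else if k ∈ X₁ \ X₂ then .vc f.2.2
  else if k ∈ (X₂ \ X₁) ∩ (fdClosure Δ X₁ \ X₁) then .vb f.2.1
  else if k ∈ (X₂ \ X₁) \ (fdClosure Δ X₁ \ X₁) then .vab (f.1, f.2.1)
  else if k ∈ (fdClosure Δ X₁ \ X₁) \ (X₂ \ X₁) then .vbc (f.2.1, f.2.2)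
  else .vabc f

section Aux18

variable {ι α β γ : Type*} {Δ : Set (Set ι × Set ι)} {X₁ X₂ : Set ι}

lemma subset_fdClosure18 (Δ : Set (Set ι × Set ι)) (X : Set ι) : X ⊆ fdClosure Δ X :=
  fun _ ha => Set.mem_sInter.mpr fun _ hZ => hZ.1 ha

lemma fdClosure_closed18 (Δ : Set (Set ι × Set ι)) (X : Set ι) :
    ∀ d ∈ Δ, d.1 ⊆ fdClosure Δ X → d.2 ⊆ fdClosure Δ X := fun d hd hsub a ha =>
  Set.mem_sInter.mpr fun Z hZ => hZ.2 d hd (fun x hx => Set.mem_sInter.mp (hsub hx) Z hZ) ha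

lemma pi_S0 {k : ι} (h : k ∈ X₁ ∩ X₂) (f : α × β × γ) :
    Pi18 Δ X₁ X₂ f k = .const := by
  simp only [Pi18, if_pos h]

lemma pi_S1 {k : ι} (h : k ∈ X₁ \ X₂) (f : α × β × γ) :
    Pi18 Δ X₁ X₂ f k = .vc f.2.2 := by
  have h0 : k ∉ X₁ ∩ X₂ := fun hh => h.2 hh.2
  simp only [Pi18, if_neg h0, if_pos h]

lemma pi_S2 {k : ι} (h : k ∈ (X₂ \ X₁) ∩ (fdClosure Δ X₁ \ X₁)) (f : α × β × γ) :
    Pi18 Δ X₁ X₂ f k = .vb f.2.1 := by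
  have h0 : k ∉ X₁ ∩ X₂ := fun hh => h.1.2 hh.1
  have h1 : k ∉ X₁ \ X₂ := fun hh => h.1.2 hh.1
  simp only [Pi18, if_neg h0, if_neg h1, if_pos h]

lemma pi_S3 {k : ι} (h : k ∈ (X₂ \ X₁) \ (fdClosure Δ X₁ \ X₁)) (f : α × β × γ) :
    Pi18 Δ X₁ X₂ f k = .vab (f.1, f.2.1) := by
  have h0 : k ∉ X₁ ∩ X₂ := fun hh => h.1.2 hh.1
  have h1 : k ∉ X₁ \ X₂ := fun hh => h.1.2 hh.1
  have h2 : k ∉ (X₂ \ X₁) ∩ (fdClosure Δ X₁ \ X₁) := fun hh => h.2 hh.2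
  simp only [Pi18, if_neg h0, if_neg h1, if_neg h2, if_pos h]

lemma pi_S4 {k : ι} (h : k ∈ (fdClosure Δ X₁ \ X₁) \ (X₂ \ X₁)) (f : α × β × γ) :
    Pi18 Δ X₁ X₂ f k = .vbc (f.2.1, f.2.2) := by
  have h0 : k ∉ X₁ ∩ X₂ := fun hh => h.1.2 hh.1
  have h1 : k ∉ X₁ \ X₂ := fun hh => h.1.2 hh.1
  have h2 : k ∉ (X₂ \ X₁) ∩ (fdClosure Δ X₁ \ X₁) := fun hh => h.2 hh.1
  have h3 : k ∉ (X₂ \ X₁) \ (fdClosure Δ X₁ \ X₁) := fun hh => h.2 hh.1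
  simp only [Pi18, if_neg h0, if_neg h1, if_neg h2, if_neg h3, if_pos h]

lemma pi_S5 {k : ι} (h1 : k ∉ X₁) (h2 : k ∉ X₂) (h3 : k ∉ fdClosure Δ X₁ \ X₁)
    (f : α × β × γ) : Pi18 Δ X₁ X₂ f k = .vabc f := by
  have h0 : k ∉ X₁ ∩ X₂ := fun hh => h1 hh.1
  have ha : k ∉ X₁ \ X₂ := fun hh => h1 hh.1
  have hb : k ∉ (X₂ \ X₁) ∩ (fdClosure Δ X₁ \ X₁) := fun hh => h2 hh.1.1
  have hcx : k ∉ (X₂ \ X₁) \ (fdClosure Δ X₁ \ X₁) := fun hh => h2 hh.1.1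
  have hd : k ∉ (fdClosure Δ X₁ \ X₁) \ (X₂ \ X₁) := fun hh => h3 hh.1
  simp only [Pi18, if_neg h0, if_neg ha, if_neg hb, if_neg hcx, if_neg hd]

end Aux18

/-- Δ contains two nontrivial local minima X₁→Y₁, X₂→Y₂ with
(X₁⁺∖X₁)∩X₂ ≠ ∅, (X₂⁺∖X₂)∩X₁ ≠ ∅ and (X₂∖X₁) ⊄ (X₁⁺∖X₁).  Then Π is
injective, and for distinct facts f = (a,b,c), f' = (a',b',c'):
{f,f'} satisfies {AB→C, C→B} iff {Π(f), Π(f')} satisfies Δ. -/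
theorem stmt18 {ι α β γ : Type*} (Δ : Set (Set ι × Set ι))
    (X₁ Y₁ X₂ Y₂ : Set ι) (h1 : (X₁, Y₁) ∈ Δ) (h2 : (X₂, Y₂) ∈ Δ)
    (hne : X₁ ≠ X₂)
    (hmin1 : ∀ d ∈ Δ, ¬ d.1 ⊂ X₁) (hmin2 : ∀ d ∈ Δ, ¬ d.1 ⊂ X₂)
    (hnt1 : ¬ Y₁ ⊆ X₁) (hnt2 : ¬ Y₂ ⊆ X₂)
    (hi1 : ((fdClosure Δ X₁ \ X₁) ∩ X₂).Nonempty)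
    (hi2 : ((fdClosure Δ X₂ \ X₂) ∩ X₁).Nonempty)
    (hns : ¬ (X₂ \ X₁) ⊆ (fdClosure Δ X₁ \ X₁)) :
    Function.Injective (Pi18 Δ X₁ X₂ : α × β × γ → ι → Val α β γ) ∧
    ∀ f f' : α × β × γ, f ≠ f' →
      (((f.1 = f'.1 ∧ f.2.1 = f'.2.1 → f.2.2 = f'.2.2) ∧
        (f.2.2 = f'.2.2 → f.2.1 = f'.2.1)) ↔
        Sat {Pi18 Δ X₁ X₂ f, Pi18 Δ X₁ X₂ f'} Δ) := by
  -- X₁ \ X₂ is nonempty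
  have hX1not : ¬ X₁ ⊆ X₂ := fun hsub =>
    hmin2 (X₁, Y₁) h1 (ssubset_iff_subset_ne.mpr ⟨hsub, hne⟩)
  obtain ⟨k1, hk1X, hk1n⟩ := Set.not_subset.mp hX1not
  obtain ⟨k3, hk3X, hk3C⟩ := Set.not_subset.mp hns
  -- the key forward lemma
  have key : ∀ f f' : α × β × γ, f ≠ f' →
      (f.1 = f'.1 ∧ f.2.1 = f'.2.1 → f.2.2 = f'.2.2) →
      (f.2.2 = f'.2.2 → f.2.1 = f'.2.1) →
      ∀ d ∈ Δ, (∀ k ∈ d.1, Pi18 Δ X₁ X₂ f k = Pi18 Δ X₁ X₂ f' k) →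
        ∀ k ∈ d.2, Pi18 Δ X₁ X₂ f k = Pi18 Δ X₁ X₂ f' k := by
    intro f f' hff habc hcb d hd hagree
    have hc : f.2.2 = f'.2.2 := by
      by_contra hc
      have hsub : d.1 ⊆ X₂ := by
        intro k hk
        by_contra hk2
        have hkeq := hagree k hk
        by_cases hk1 : k ∈ X₁
        · rw [pi_S1 ⟨hk1, hk2⟩ f, pi_S1 ⟨hk1, hk2⟩ f'] at hkeq
          exact hc (Val.vc.inj hkeq)
        · by_cases hkc : k ∈ fdClosure Δ X₁ \ X₁
          · rw [pi_S4 ⟨hkc, fun h => hk2 h.1⟩ f, pi_S4 ⟨hkc, fun h => hk2 h.1⟩ f'] at hkeq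
            exact hc (congrArg Prod.snd (Val.vbc.inj hkeq))
          · rw [pi_S5 hk1 hk2 hkc f, pi_S5 hk1 hk2 hkc f'] at hkeq
            exact hff (Val.vabc.inj hkeq)
      have hXeq : d.1 = X₂ := by
        by_contra hne'
        exact hmin2 d hd (ssubset_iff_subset_ne.mpr ⟨hsub, hne'⟩)
      have hk3 : k3 ∈ d.1 := by rw [hXeq]; exact hk3X.1
      have hkeq := hagree k3 hk3
      rw [pi_S3 ⟨hk3X, hk3C⟩ f, pi_S3 ⟨hk3X, hk3C⟩ f'] at hkeq
      have hab := Prod.ext_iff.mp (Val.vab.inj hkeq)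
      exact hc (habc hab)
    have hb : f.2.1 = f'.2.1 := hcb hc
    have hna : f.1 ≠ f'.1 := fun ha =>
      hff (Prod.ext_iff.mpr ⟨ha, Prod.ext_iff.mpr ⟨hb, hc⟩⟩)
    have hsub : d.1 ⊆ fdClosure Δ X₁ := by
      intro k hk
      by_cases hk1 : k ∈ X₁
      · exact subset_fdClosure18 Δ X₁ hk1
      by_cases hkc : k ∈ fdClosure Δ X₁
      · exact hkc
      exfalso
      have hkeq := hagree k hk
      have hkC : k ∉ fdClosure Δ X₁ \ X₁ := fun h => hkc h.1
      by_cases hk2 : k ∈ X₂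
      · rw [pi_S3 ⟨⟨hk2, hk1⟩, hkC⟩ f, pi_S3 ⟨⟨hk2, hk1⟩, hkC⟩ f'] at hkeq
        exact hna (Prod.ext_iff.mp (Val.vab.inj hkeq)).1
      · rw [pi_S5 hk1 hk2 hkC f, pi_S5 hk1 hk2 hkC f'] at hkeq
        exact hff (Val.vabc.inj hkeq)
    have hY : d.2 ⊆ fdClosure Δ X₁ := fdClosure_closed18 Δ X₁ d hd hsub
    intro k hk
    by_cases hk1 : k ∈ X₁
    · by_cases hk2 : k ∈ X₂
      · rw [pi_S0 ⟨hk1, hk2⟩ f, pi_S0 ⟨hk1, hk2⟩ f']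
      · rw [pi_S1 ⟨hk1, hk2⟩ f, pi_S1 ⟨hk1, hk2⟩ f', hc]
    · have hkC : k ∈ fdClosure Δ X₁ \ X₁ := ⟨hY hk, hk1⟩
      by_cases hk2 : k ∈ X₂
      · rw [pi_S2 ⟨⟨hk2, hk1⟩, hkC⟩ f, pi_S2 ⟨⟨hk2, hk1⟩, hkC⟩ f', hb]
      · rw [pi_S4 ⟨hkC, fun h => hk2 h.1⟩ f, pi_S4 ⟨hkC, fun h => hk2 h.1⟩ f', hb, hc]
  constructor
  · -- injectivity
    intro f f' hff
    have e1 := congrFun hff k1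
    rw [pi_S1 ⟨hk1X, hk1n⟩ f, pi_S1 ⟨hk1X, hk1n⟩ f'] at e1
    have hc : f.2.2 = f'.2.2 := Val.vc.inj e1
    have e3 := congrFun hff k3
    rw [pi_S3 ⟨hk3X, hk3C⟩ f, pi_S3 ⟨hk3X, hk3C⟩ f'] at e3
    have hab := Prod.ext_iff.mp (Val.vab.inj e3)
    exact Prod.ext_iff.mpr ⟨hab.1, Prod.ext_iff.mpr ⟨hab.2, hc⟩⟩
  · intro f f' hff
    constructor
    · rintro ⟨habc, hcb⟩
      intro d hd g hg h hh hagree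
      simp only [Set.mem_insert_iff, Set.mem_singleton_iff] at hg hh
      have habc' : f'.1 = f.1 ∧ f'.2.1 = f.2.1 → f'.2.2 = f.2.2 := fun hx =>
        (habc ⟨hx.1.symm, hx.2.symm⟩).symm
      have hcb' : f'.2.2 = f.2.2 → f'.2.1 = f.2.1 := fun hx => (hcb hx.symm).symm
      rcases hg with rfl | rfl <;> rcases hh with rfl | rfl
      · exact fun _ _ => rfl
      · exact key f f' hff habc hcb d hd hagree
      · exact key f' f (Ne.symm hff) habc' hcb' d hd hagree
      · exact fun _ _ => rfl
    · intro hsat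
      have hmemf : Pi18 Δ X₁ X₂ f ∈ ({Pi18 Δ X₁ X₂ f, Pi18 Δ X₁ X₂ f'} : Set (ι → Val α β γ)) :=
        Set.mem_insert _ _
      have hmemf' : Pi18 Δ X₁ X₂ f' ∈ ({Pi18 Δ X₁ X₂ f, Pi18 Δ X₁ X₂ f'} : Set (ι → Val α β γ)) :=
        Set.mem_insert_of_mem _ rfl
      constructor
      · rintro ⟨ha, hb⟩
        have hagree : ∀ k ∈ X₂, Pi18 Δ X₁ X₂ f k = Pi18 Δ X₁ X₂ f' k := by
          intro k hk2
          by_cases hk1 : k ∈ X₁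
          · rw [pi_S0 ⟨hk1, hk2⟩ f, pi_S0 ⟨hk1, hk2⟩ f']
          by_cases hkc : k ∈ fdClosure Δ X₁ \ X₁
          · rw [pi_S2 ⟨⟨hk2, hk1⟩, hkc⟩ f, pi_S2 ⟨⟨hk2, hk1⟩, hkc⟩ f', hb]
          · rw [pi_S3 ⟨⟨hk2, hk1⟩, hkc⟩ f, pi_S3 ⟨⟨hk2, hk1⟩, hkc⟩ f', ha, hb]
        have hY := hsat (X₂, Y₂) h2 _ hmemf _ hmemf' hagree
        obtain ⟨k, hkY, hk2⟩ := Set.not_subset.mp hnt2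
        have hkeq := hY k hkY
        by_cases hk1 : k ∈ X₁
        · rw [pi_S1 ⟨hk1, hk2⟩ f, pi_S1 ⟨hk1, hk2⟩ f'] at hkeq
          exact Val.vc.inj hkeq
        by_cases hkc : k ∈ fdClosure Δ X₁ \ X₁
        · rw [pi_S4 ⟨hkc, fun h => hk2 h.1⟩ f, pi_S4 ⟨hkc, fun h => hk2 h.1⟩ f'] at hkeq
          exact congrArg Prod.snd (Val.vbc.inj hkeq)
        · rw [pi_S5 hk1 hk2 hkc f, pi_S5 hk1 hk2 hkc f'] at hkeq
          exact congrArg (fun p => p.2.2) (Val.vabc.inj hkeq)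
      · intro hc
        have hagree : ∀ k ∈ X₁, Pi18 Δ X₁ X₂ f k = Pi18 Δ X₁ X₂ f' k := by
          intro k hk1
          by_cases hk2 : k ∈ X₂
          · rw [pi_S0 ⟨hk1, hk2⟩ f, pi_S0 ⟨hk1, hk2⟩ f']
          · rw [pi_S1 ⟨hk1, hk2⟩ f, pi_S1 ⟨hk1, hk2⟩ f', hc]
        have hY := hsat (X₁, Y₁) h1 _ hmemf _ hmemf' hagree
        have hYc : Y₁ ⊆ fdClosure Δ X₁ :=
          fdClosure_closed18 Δ X₁ (X₁, Y₁) h1 (subset_fdClosure18 Δ X₁)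
        obtain ⟨k, hkY, hk1⟩ := Set.not_subset.mp hnt1
        have hkeq := hY k hkY
        have hkC : k ∈ fdClosure Δ X₁ \ X₁ := ⟨hYc hkY, hk1⟩
        by_cases hk2 : k ∈ X₂
        · rw [pi_S2 ⟨⟨hk2, hk1⟩, hkC⟩ f, pi_S2 ⟨⟨hk2, hk1⟩, hkC⟩ f'] at hkeq
          exact Val.vb.inj hkeq
        · rw [pi_S4 ⟨hkC, fun h => hk2 h.1⟩ f, pi_S4 ⟨hkC, fun h => hk2 h.1⟩ f'] at hkeq
          exact congrArg Prod.fst (Val.vbc.inj hkeq)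
end
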